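/- arXiv:1409.5970 — 2 statements merged into one kernel-verified Lean document; each statement's English description precedes it below -/
import Mathlib

section
/- Let a : ℝ → ℝ be continuous, nonnegative, and integrable, and 1 < α < 2. Then the functional I(q) = ½‖q‖_{H^1}² − ∫_ℝ a(t)|q|^α dt is coercive on H^1(ℝ, ℝ^n): I(q) → +∞ as ‖q‖_{H^1} → +∞. More precisely, I(q) ≥ ½‖q‖_{H^1}² − π^{α/2}(∫_ℝ a dt)·‖q‖_{H^1}^α. -/
/-!
The derivative `2⟪q, q'⟫` of `‖q‖²` is bounded by `‖q‖² + ‖q'‖²`, hence integrable, and `‖q‖²`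
itself is integrable, so `‖q‖² → 0` at `-∞`. Integrating the derivative from `-∞` to `t` gives
`‖q t‖² ≤ ‖q‖²_{H¹}`, a sharper form of the `√π` embedding. Therefore
`∫ a ‖q‖^α ≤ (∫ a) ‖q‖_{H¹}^α ≤ π^{α/2} (∫ a) ‖q‖_{H¹}^α`, and since `α < 2` the term
`½ ‖q‖²_{H¹}` dominates.
-/

open MeasureTheory Filter Real Set Topology

open scoped RealInnerProductSpace

theorem sq_norm_le_integral_sq_norm_add_sq_norm_deriv {E : Type*} [NormedAddCommGroup E]
    [InnerProductSpace ℝ E] {q : ℝ → E} (hq : Differentiable ℝ q)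
    (hg : Integrable fun t => ‖q t‖ ^ 2 + ‖deriv q t‖ ^ 2) (t : ℝ) :
    ‖q t‖ ^ 2 ≤ ∫ s, ‖q s‖ ^ 2 + ‖deriv q s‖ ^ 2 := by
  have hderiv (s : ℝ) : HasDerivAt (‖q ·‖ ^ 2) (2 * ⟪q s, deriv q s⟫) s :=
    (hq s).hasDerivAt.norm_sq
  have hbound (s : ℝ) : |2 * ⟪q s, deriv q s⟫| ≤ ‖q s‖ ^ 2 + ‖deriv q s‖ ^ 2 := by
    rw [abs_mul, abs_two]
    nlinarith [abs_real_inner_le_norm (q s) (deriv q s), two_mul_le_add_sq ‖q s‖ ‖deriv q s‖]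
  -- `2⟪q, q'⟫` is measurable as the derivative of the real function `‖q‖²`.
  have hint_deriv : Integrable fun s => 2 * ⟪q s, deriv q s⟫ :=
    hg.mono' ((aestronglyMeasurable_deriv _ _).congr (ae_of_all _ fun s => (hderiv s).deriv))
      (ae_of_all _ hbound)
  have hint : Integrable fun s => ‖q s‖ ^ 2 :=
    hg.mono' (hq.continuous.norm.pow 2).aestronglyMeasurable (ae_of_all _ fun s => by simp)
  have hlim : Tendsto (‖q ·‖ ^ 2) atBot (𝓝 0) :=
    tendsto_zero_of_hasDerivAt_of_integrableOn_Iic (a := t) (fun s _ => hderiv s)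
      hint_deriv.integrableOn hint.integrableOn
  calc ‖q t‖ ^ 2 = ∫ s in Iic t, 2 * ⟪q s, deriv q s⟫ := by
        rw [integral_Iic_of_hasDerivAt_of_tendsto' (fun s _ => hderiv s)
          hint_deriv.integrableOn hlim, sub_zero]
    _ ≤ ∫ s in Iic t, ‖q s‖ ^ 2 + ‖deriv q s‖ ^ 2 :=
        setIntegral_mono hint_deriv.integrableOn hg.integrableOn
          fun s => (le_abs_self _).trans (hbound s)
    _ ≤ ∫ s, ‖q s‖ ^ 2 + ‖deriv q s‖ ^ 2 :=
        setIntegral_le_integral hg (ae_of_all _ fun s => by positivity)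

theorem integral_mul_rpow_le_of_le {X : Type*} [MeasurableSpace X] {μ : Measure X}
    {a u : X → ℝ} {α B : ℝ} (ha : ∀ x, 0 ≤ a x) (ha_int : Integrable a μ) (hu : ∀ x, 0 ≤ u x)
    (huB : ∀ x, u x ≤ B) (hα : 0 ≤ α) (hau : Integrable (fun x => a x * u x ^ α) μ) :
    ∫ x, a x * u x ^ α ∂μ ≤ (∫ x, a x ∂μ) * B ^ α := by
  rw [← integral_mul_const]
  exact integral_mono hau (ha_int.mul_const _) fun x =>
    mul_le_mul_of_nonneg_left (rpow_le_rpow (hu x) (huB x) hα) (ha x)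

theorem tendsto_half_sq_sub_mul_rpow_atTop {α : ℝ} (hα0 : 0 < α) (hα2 : α < 2) (C : ℝ) :
    Tendsto (fun x : ℝ => 1 / 2 * x ^ 2 - C * x ^ α) atTop atTop := by
  have h : Tendsto (fun x : ℝ => x ^ α * (x ^ (2 - α) / 2 - C)) atTop atTop :=
    (tendsto_rpow_atTop hα0).atTop_mul_atTop₀ <| tendsto_atTop_add_const_right _ _ <|
      (tendsto_rpow_atTop (by linarith)).atTop_div_const two_pos
  refine h.congr' ((eventually_gt_atTop 0).mono fun x hx => ?_)
  rw [mul_sub, mul_div_assoc', ← rpow_add hx, add_sub_cancel, rpow_two]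
  ring

theorem stmt_4_general (n : ℕ) (a : ℝ → ℝ) (α : ℝ)
    (ha_nonneg : ∀ t, 0 ≤ a t) (ha_int : Integrable a)
    (hα1 : 1 < α) (hα2 : α < 2) :
    (∀ q : ℝ → EuclideanSpace ℝ (Fin n), Differentiable ℝ q →
      Integrable (fun t => ‖q t‖ ^ 2 + ‖deriv q t‖ ^ 2) →
      Integrable (fun t => a t * ‖q t‖ ^ α) →
      ((1 : ℝ) / 2) * (∫ t : ℝ, (‖q t‖ ^ 2 + ‖deriv q t‖ ^ 2))
          - (∫ t : ℝ, a t * ‖q t‖ ^ α)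
        ≥ ((1 : ℝ) / 2) * ((∫ t : ℝ, (‖q t‖ ^ 2 + ‖deriv q t‖ ^ 2)) ^ ((1:ℝ)/2)) ^ 2
          - π ^ (α / 2) * (∫ t : ℝ, a t) *
            ((∫ t : ℝ, (‖q t‖ ^ 2 + ‖deriv q t‖ ^ 2)) ^ ((1:ℝ)/2)) ^ α) ∧
    (∀ M : ℝ, ∃ R : ℝ, ∀ q : ℝ → EuclideanSpace ℝ (Fin n), Differentiable ℝ q →
      Integrable (fun t => ‖q t‖ ^ 2 + ‖deriv q t‖ ^ 2) →
      Integrable (fun t => a t * ‖q t‖ ^ α) →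
      R < (∫ t : ℝ, (‖q t‖ ^ 2 + ‖deriv q t‖ ^ 2)) ^ ((1:ℝ)/2) →
      M < ((1 : ℝ) / 2) * (∫ t : ℝ, (‖q t‖ ^ 2 + ‖deriv q t‖ ^ 2))
          - (∫ t : ℝ, a t * ‖q t‖ ^ α)) := by
  set C := π ^ (α / 2) * ∫ t, a t
  have hlower (q : ℝ → EuclideanSpace ℝ (Fin n)) (hq : Differentiable ℝ q)
      (hg : Integrable fun t => ‖q t‖ ^ 2 + ‖deriv q t‖ ^ 2)
      (haq : Integrable fun t => a t * ‖q t‖ ^ α) :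
      1 / 2 * ((∫ t, ‖q t‖ ^ 2 + ‖deriv q t‖ ^ 2) ^ (1 / 2 : ℝ)) ^ 2
          - C * ((∫ t, ‖q t‖ ^ 2 + ‖deriv q t‖ ^ 2) ^ (1 / 2 : ℝ)) ^ α
        ≤ 1 / 2 * (∫ t, ‖q t‖ ^ 2 + ‖deriv q t‖ ^ 2) - ∫ t, a t * ‖q t‖ ^ α := by
    set S := ∫ t, ‖q t‖ ^ 2 + ‖deriv q t‖ ^ 2
    rw [← sqrt_eq_rpow, sq_sqrt (integral_nonneg fun t => by positivity)]
    have hqS (t : ℝ) : ‖q t‖ ≤ √S :=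
      le_sqrt_of_sq_le (sq_norm_le_integral_sq_norm_add_sq_norm_deriv hq hg t)
    have hπ : 1 ≤ π ^ (α / 2) := one_le_rpow (by linarith [pi_gt_three]) (by linarith)
    have hCa : 0 ≤ (∫ t, a t) * √S ^ α := mul_nonneg (integral_nonneg ha_nonneg) (by positivity)
    suffices ∫ t, a t * ‖q t‖ ^ α ≤ C * √S ^ α by linarith
    calc ∫ t, a t * ‖q t‖ ^ α ≤ (∫ t, a t) * √S ^ α :=
          integral_mul_rpow_le_of_le ha_nonneg ha_int (fun t => norm_nonneg _) hqS
            (by linarith) haq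
      _ ≤ C * √S ^ α := by simpa only [C, mul_assoc] using le_mul_of_one_le_left hCa hπ
  refine ⟨fun q hq hg haq => hlower q hq hg haq, fun M => ?_⟩
  obtain ⟨R, hR⟩ := eventually_atTop.mp
    ((tendsto_half_sq_sub_mul_rpow_atTop (by linarith) hα2 C).eventually_gt_atTop M)
  exact ⟨R, fun q hq hg haq hRq => (hR _ hRq.le).trans_le (hlower q hq hg haq)⟩

/-- coercivity of `I` on `H¹(ℝ,ℝⁿ)` together with the precise lower bound
`I(q) ≥ ½‖q‖² − π^{α/2}(∫a)‖q‖^α`, where `‖q‖ = (∫(‖q‖²+‖q'‖²))^{1/2}`. -/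
theorem stmt_4 (n : ℕ) (a : ℝ → ℝ) (α : ℝ)
    (ha_cont : Continuous a) (ha_nonneg : ∀ t, 0 ≤ a t) (ha_int : Integrable a)
    (hα1 : 1 < α) (hα2 : α < 2) :
    (∀ q : ℝ → EuclideanSpace ℝ (Fin n), Differentiable ℝ q →
      Integrable (fun t => ‖q t‖ ^ 2 + ‖deriv q t‖ ^ 2) →
      Integrable (fun t => a t * ‖q t‖ ^ α) →
      ((1 : ℝ) / 2) * (∫ t : ℝ, (‖q t‖ ^ 2 + ‖deriv q t‖ ^ 2))
          - (∫ t : ℝ, a t * ‖q t‖ ^ α)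
        ≥ ((1 : ℝ) / 2) * ((∫ t : ℝ, (‖q t‖ ^ 2 + ‖deriv q t‖ ^ 2)) ^ ((1:ℝ)/2)) ^ 2
          - π ^ (α / 2) * (∫ t : ℝ, a t) *
            ((∫ t : ℝ, (‖q t‖ ^ 2 + ‖deriv q t‖ ^ 2)) ^ ((1:ℝ)/2)) ^ α) ∧
    (∀ M : ℝ, ∃ R : ℝ, ∀ q : ℝ → EuclideanSpace ℝ (Fin n), Differentiable ℝ q →
      Integrable (fun t => ‖q t‖ ^ 2 + ‖deriv q t‖ ^ 2) →
      Integrable (fun t => a t * ‖q t‖ ^ α) →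
      R < (∫ t : ℝ, (‖q t‖ ^ 2 + ‖deriv q t‖ ^ 2)) ^ ((1:ℝ)/2) →
      M < ((1 : ℝ) / 2) * (∫ t : ℝ, (‖q t‖ ^ 2 + ‖deriv q t‖ ^ 2))
          - (∫ t : ℝ, a t * ‖q t‖ ^ α)) :=
  stmt_4_general n a α ha_nonneg ha_int hα1 hα2
end

section
/- Assume a : ℝ → ℝ is continuous, nonnegative, not identically zero, a ∈ L^1(ℝ) ∩ L^2(ℝ), and 1 < α < 2. Then the system q''(t) + V_q(t, q(t)) = 0 with V(t,q) = −½|q|² + a(t)|q|^α possesses at least one nonzero homoclinic solution q ∈ H^1(ℝ, ℝ^n): q is a solution satisfying q(t) → 0 and q'(t) → 0 as t → ±∞. -/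
/-!
Look for `q = u • e` with `‖e‖ = 1` and `u > 0` a solution of `u'' = u - α a u^(α-1)`.
As `e^{-|t|} / 2` is the Green function of `-d²/dt² + 1` on `ℝ`, it suffices to find a fixed
point of the monotone map `T u = (α/2 · a · u^(α-1)) ⋆ e^{-|·|}`. Because `α - 1 < 1`, a large
constant `M` is a supersolution (`α/2 ‖a‖₁ M^(α-1) ≤ M`), and, by
`e^{-|t|} e^{-|s|} ≤ e^{-|t-s|}`, `ε e^{-|t|}` is a subsolution for small `ε > 0`. Iterating `T`
from the subsolution gives an increasing sequence whose limit is, by monotone convergence, a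
fixed point. Writing `g = α/2 · a · u^(α-1)` and splitting `u = g ⋆ e^{-|·|}` at `t` as
`e^{-t} ∫_{-∞}^t e^s g + e^t ∫_t^∞ e^{-s} g` shows that `u` is twice differentiable with
`u'' = u - 2g` and `|u'| ≤ u`; since `u` is integrable, so is `u'`, and both tend to `0` at `±∞`.
-/

open MeasureTheory Filter Real Set Topology
open scoped Convolution

noncomputable def expNegAbs (x : ℝ) : ℝ := exp (-|x|)

lemma expNegAbs_pos (x : ℝ) : 0 < expNegAbs x := exp_pos _

lemma expNegAbs_le_one (x : ℝ) : expNegAbs x ≤ 1 :=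
  exp_le_one_iff.2 (neg_nonpos.2 (abs_nonneg x))

lemma norm_expNegAbs_le_one (x : ℝ) : ‖expNegAbs x‖ ≤ 1 := by
  rw [norm_of_nonneg (expNegAbs_pos x).le]; exact expNegAbs_le_one x

@[fun_prop]
lemma continuous_expNegAbs : Continuous expNegAbs := by
  unfold expNegAbs; fun_prop

lemma integrable_expNegAbs : Integrable expNegAbs := by
  have hIic : IntegrableOn expNegAbs (Iic 0) :=
    (integrableOn_exp_Iic 0).congr_fun
      (fun x hx => by simp [expNegAbs, abs_of_nonpos (mem_Iic.1 hx)]) measurableSet_Iic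
  have hIoi : IntegrableOn expNegAbs (Ioi 0) :=
    (exp_neg_integrableOn_Ioi 0 one_pos).congr_fun
      (fun x hx => by simp [expNegAbs, abs_of_pos (mem_Ioi.1 hx)]) measurableSet_Ioi
  simpa using hIic.union hIoi

lemma expNegAbs_mul_le_expNegAbs_sub (t s : ℝ) :
    expNegAbs t * expNegAbs s ≤ expNegAbs (t - s) := by
  unfold expNegAbs
  rw [← exp_add, exp_le_exp]
  linarith [abs_sub t s]

section Convolution

variable {g h : ℝ → ℝ}

lemma convolution_expNegAbs_apply (g : ℝ → ℝ) (t : ℝ) :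
    (g ⋆ expNegAbs) t = ∫ s, g s * expNegAbs (t - s) := rfl

lemma integrable_mul_expNegAbs_sub (hg : Integrable g) (t : ℝ) :
    Integrable fun s => g s * expNegAbs (t - s) :=
  hg.mul_bdd (by fun_prop) (ae_of_all _ fun _ => norm_expNegAbs_le_one _)

lemma continuous_convolution_expNegAbs (hg : Integrable g) : Continuous (g ⋆ expNegAbs) :=
  BddAbove.continuous_convolution_right_of_integrable _
    ⟨1, by rintro _ ⟨x, rfl⟩; exact norm_expNegAbs_le_one x⟩
    hg continuous_expNegAbs

lemma integrable_convolution_expNegAbs (hg : Integrable g) : Integrable (g ⋆ expNegAbs) :=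
  hg.integrable_convolution _ integrable_expNegAbs

lemma convolution_expNegAbs_nonneg (hg : 0 ≤ g) (t : ℝ) : 0 ≤ (g ⋆ expNegAbs) t :=
  integral_nonneg fun s => mul_nonneg (hg s) (expNegAbs_pos _).le

lemma convolution_expNegAbs_mono (hg : Integrable g) (hh : Integrable h) (hgh : g ≤ h) (t : ℝ) :
    (g ⋆ expNegAbs) t ≤ (h ⋆ expNegAbs) t :=
  integral_mono (integrable_mul_expNegAbs_sub hg t) (integrable_mul_expNegAbs_sub hh t)
    fun s => mul_le_mul_of_nonneg_right (hgh s) (expNegAbs_pos _).le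

lemma convolution_expNegAbs_le_integral (hg : Integrable g) (hg0 : 0 ≤ g) (t : ℝ) :
    (g ⋆ expNegAbs) t ≤ ∫ s, g s :=
  integral_mono (integrable_mul_expNegAbs_sub hg t) hg
    fun s => mul_le_of_le_one_right (hg0 s) (expNegAbs_le_one _)

lemma expNegAbs_mul_integral_le_convolution (hg : Integrable g) (hg0 : 0 ≤ g) (t : ℝ) :
    expNegAbs t * ∫ s, g s * expNegAbs s ≤ (g ⋆ expNegAbs) t := by
  rw [← integral_const_mul]
  refine integral_mono ((hg.mul_bdd (by fun_prop)
    (ae_of_all _ fun _ => norm_expNegAbs_le_one _)).const_mul _)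
    (integrable_mul_expNegAbs_sub hg t) fun s => ?_
  calc expNegAbs t * (g s * expNegAbs s) = g s * (expNegAbs t * expNegAbs s) := by ring
    _ ≤ g s * expNegAbs (t - s) :=
        mul_le_mul_of_nonneg_left (expNegAbs_mul_le_expNegAbs_sub t s) (hg0 s)

lemma tendsto_convolution_expNegAbs_of_monotone {G : ℕ → ℝ → ℝ} (hG : ∀ k, Integrable (G k))
    (hg : Integrable g) (hmono : ∀ s, Monotone (G · s))
    (hlim : ∀ s, Tendsto (G · s) atTop (𝓝 (g s))) (t : ℝ) :
    Tendsto (fun k => (G k ⋆ expNegAbs) t) atTop (𝓝 ((g ⋆ expNegAbs) t)) :=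
  integral_tendsto_of_tendsto_of_monotone (fun k => integrable_mul_expNegAbs_sub (hG k) t)
    (integrable_mul_expNegAbs_sub hg t)
    (ae_of_all _ fun s _ _ hkl => mul_le_mul_of_nonneg_right (hmono s hkl) (expNegAbs_pos _).le)
    (ae_of_all _ fun s => (hlim s).mul_const _)

end Convolution

lemma hasDerivAt_integral_Iic {f : ℝ → ℝ} (hf : Continuous f)
    (hint : ∀ t, IntegrableOn f (Iic t)) (t : ℝ) :
    HasDerivAt (fun t => ∫ s in Iic t, f s) (f t) t := by
  have heq : (fun t => ∫ s in Iic t, f s) = fun t => (∫ s in Iic 0, f s) + ∫ s in 0..t, f s :=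
    funext fun τ => by rw [← intervalIntegral.integral_Iic_sub_Iic (hint 0) (hint τ)]; ring
  rw [heq]
  exact (hf.integral_hasStrictDerivAt 0 t).hasDerivAt.const_add _

lemma hasDerivAt_integral_Ioi {f : ℝ → ℝ} (hf : Continuous f)
    (hint : ∀ t, IntegrableOn f (Ioi t)) (t : ℝ) :
    HasDerivAt (fun t => ∫ s in Ioi t, f s) (-f t) t := by
  have heq : (fun t => ∫ s in Ioi t, f s) = fun t => (∫ s in Ioi 0, f s) - ∫ s in 0..t, f s :=
    funext fun τ => by rw [← intervalIntegral.integral_Ioi_sub_Ioi' (hint 0) (hint τ)]; ring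
  rw [heq]
  exact (hf.integral_hasStrictDerivAt 0 t).hasDerivAt.const_sub _

section Green

variable {g : ℝ → ℝ}

noncomputable def greenLeft (g : ℝ → ℝ) (t : ℝ) : ℝ := exp (-t) * ∫ s in Iic t, exp s * g s

noncomputable def greenRight (g : ℝ → ℝ) (t : ℝ) : ℝ := exp t * ∫ s in Ioi t, exp (-s) * g s

lemma integrableOn_exp_mul_Iic_of_integrable (hg : Integrable g) (t : ℝ) :
    IntegrableOn (fun s => exp s * g s) (Iic t) :=
  hg.integrableOn.bdd_mul (by fun_prop) <| (ae_restrict_iff' measurableSet_Iic).2 <|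
    ae_of_all _ fun s hs => by rw [norm_of_nonneg (exp_pos s).le]; exact exp_le_exp.2 hs

lemma integrableOn_exp_neg_mul_Ioi_of_integrable (hg : Integrable g) (t : ℝ) :
    IntegrableOn (fun s => exp (-s) * g s) (Ioi t) :=
  hg.integrableOn.bdd_mul (by fun_prop) <| (ae_restrict_iff' measurableSet_Ioi).2 <|
    ae_of_all _ fun s hs => by
      rw [norm_of_nonneg (exp_pos _).le]; exact exp_le_exp.2 (neg_le_neg (le_of_lt hs))

lemma greenLeft_nonneg (hg : 0 ≤ g) (t : ℝ) : 0 ≤ greenLeft g t :=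
  mul_nonneg (exp_pos _).le <| setIntegral_nonneg measurableSet_Iic fun s _ =>
    mul_nonneg (exp_pos s).le (hg s)

lemma greenRight_nonneg (hg : 0 ≤ g) (t : ℝ) : 0 ≤ greenRight g t :=
  mul_nonneg (exp_pos _).le <| setIntegral_nonneg measurableSet_Ioi fun s _ =>
    mul_nonneg (exp_pos _).le (hg s)

lemma greenLeft_add_greenRight (hg : Integrable g) (t : ℝ) :
    greenLeft g t + greenRight g t = (g ⋆ expNegAbs) t := by
  have hint := integrable_mul_expNegAbs_sub hg t
  rw [greenLeft, greenRight, ← integral_const_mul, ← integral_const_mul,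
    convolution_expNegAbs_apply,
    ← intervalIntegral.integral_Iic_add_Ioi (b := t) hint.integrableOn hint.integrableOn]
  congr 1
  · refine setIntegral_congr_fun measurableSet_Iic fun s hs => ?_
    rw [expNegAbs, abs_of_nonneg (sub_nonneg.2 hs), neg_sub, sub_eq_neg_add, exp_add]
    ring
  · refine setIntegral_congr_fun measurableSet_Ioi fun s hs => ?_
    rw [expNegAbs, abs_of_neg (sub_neg.2 hs), neg_neg, sub_eq_add_neg, exp_add]
    ring

lemma hasDerivAt_greenLeft (hg : Continuous g) (hgi : Integrable g) (t : ℝ) :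
    HasDerivAt (greenLeft g) (g t - greenLeft g t) t := by
  have := ((hasDerivAt_exp (-t)).comp t (hasDerivAt_neg t)).mul
    (hasDerivAt_integral_Iic (by fun_prop) (integrableOn_exp_mul_Iic_of_integrable hgi) t)
  refine this.congr_deriv ?_
  simp only [greenLeft, Function.comp_apply, ← mul_assoc, ← exp_add, neg_add_cancel, exp_zero]
  ring

lemma hasDerivAt_greenRight (hg : Continuous g) (hgi : Integrable g) (t : ℝ) :
    HasDerivAt (greenRight g) (greenRight g t - g t) t := by
  have := (hasDerivAt_exp t).mul
    (hasDerivAt_integral_Ioi (by fun_prop) (integrableOn_exp_neg_mul_Ioi_of_integrable hgi) t)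
  refine this.congr_deriv ?_
  simp only [greenRight, mul_neg, ← mul_assoc, ← exp_add, add_neg_cancel, exp_zero]
  ring

lemma hasDerivAt_convolution_expNegAbs (hg : Continuous g) (hgi : Integrable g) (t : ℝ) :
    HasDerivAt (g ⋆ expNegAbs) (greenRight g t - greenLeft g t) t := by
  rw [← funext (greenLeft_add_greenRight hgi)]
  exact ((hasDerivAt_greenLeft hg hgi t).add (hasDerivAt_greenRight hg hgi t)).congr_deriv
    (by ring)

lemma hasDerivAt_greenRight_sub_greenLeft (hg : Continuous g) (hgi : Integrable g) (t : ℝ) :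
    HasDerivAt (fun t => greenRight g t - greenLeft g t) ((g ⋆ expNegAbs) t - 2 * g t) t := by
  rw [← greenLeft_add_greenRight hgi]
  exact ((hasDerivAt_greenRight hg hgi t).sub (hasDerivAt_greenLeft hg hgi t)).congr_deriv
    (by ring)

lemma abs_greenRight_sub_greenLeft_le (hgi : Integrable g) (hg0 : 0 ≤ g) (t : ℝ) :
    |greenRight g t - greenLeft g t| ≤ (g ⋆ expNegAbs) t := by
  rw [← greenLeft_add_greenRight hgi, abs_le]
  constructor <;> linarith [greenLeft_nonneg hg0 t, greenRight_nonneg hg0 t]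

end Green

/- Knaster–Tarski is of no use here: the class `P` of interest (measurable functions between two
bounds) is not closed under arbitrary suprema, only under limits of increasing sequences. -/
lemma exists_fixedPoint_of_monotoneOn {X : Type*} {T : (X → ℝ) → X → ℝ} {P : Set (X → ℝ)}
    {u₀ : X → ℝ} {M : ℝ} (hbdd : ∀ u ∈ P, u ≤ fun _ => M) (hmaps : MapsTo T P P)
    (hmono : MonotoneOn T P) (hu₀ : u₀ ∈ P) (hsub : u₀ ≤ T u₀)
    (hlim : ∀ v : ℕ → X → ℝ, (∀ k, v k ∈ P) → Monotone v → ∀ u, Tendsto v atTop (𝓝 u) →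
      u ∈ P ∧ Tendsto (fun k => T (v k)) atTop (𝓝 (T u))) :
    ∃ u ∈ P, u₀ ≤ u ∧ T u = u := by
  set v : ℕ → X → ℝ := fun k => T^[k] u₀
  have hv_succ (k : ℕ) : v (k + 1) = T (v k) := Function.iterate_succ_apply' T k u₀
  have hv : ∀ k, v k ∈ P ∧ v k ≤ v (k + 1) := by
    intro k
    induction k with
    | zero => exact ⟨hu₀, hsub⟩
    | succ k ih =>
      refine ⟨hv_succ k ▸ hmaps ih.1, ?_⟩
      rw [hv_succ k, hv_succ (k + 1)]
      exact hmono ih.1 (hv_succ k ▸ hmaps ih.1) ih.2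
  have hv_mono : Monotone v := monotone_nat_of_le_succ fun k => (hv k).2
  have hv_lim : Tendsto v atTop (𝓝 (⨆ k, v k)) :=
    tendsto_atTop_ciSup hv_mono ⟨fun _ => M, by rintro _ ⟨k, rfl⟩; exact hbdd _ (hv k).1⟩
  obtain ⟨hP, hT⟩ := hlim v (fun k => (hv k).1) hv_mono _ hv_lim
  refine ⟨⨆ k, v k, hP, le_ciSup ⟨fun _ => M, by rintro _ ⟨k, rfl⟩; exact hbdd _ (hv k).1⟩ 0,
    tendsto_nhds_unique hT ?_⟩
  simpa only [hv_succ] using (tendsto_add_atTop_iff_nat 1).2 hv_lim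

lemma eventually_mul_rpow_le_self {p : ℝ} (hp : p < 1) (C : ℝ) :
    ∀ᶠ M in atTop, C * M ^ p ≤ M := by
  filter_upwards [(tendsto_rpow_atTop (sub_pos.2 hp)).eventually_ge_atTop C,
    eventually_gt_atTop 0] with M hCM hM
  calc C * M ^ p ≤ M ^ (1 - p) * M ^ p := mul_le_mul_of_nonneg_right hCM (rpow_nonneg hM.le p)
    _ = M := by rw [← rpow_add hM, sub_add_cancel, rpow_one]

lemma eventually_le_mul_rpow_self {p c : ℝ} (hp : p < 1) (hc : 0 < c) :
    ∀ᶠ ε in 𝓝[>] 0, ε ≤ c * ε ^ p := by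
  have hlim : Tendsto (fun ε : ℝ => ε ^ (1 - p)) (𝓝[>] 0) (𝓝 0) := by
    simpa [zero_rpow (sub_pos.2 hp).ne'] using
      ((continuousAt_rpow_const 0 (1 - p) (Or.inr (sub_pos.2 hp).le)).tendsto).mono_left
        nhdsWithin_le_nhds
  filter_upwards [hlim.eventually (eventually_le_nhds hc), self_mem_nhdsWithin] with ε hεc hε
  calc ε = ε ^ (1 - p) * ε ^ p := by rw [← rpow_add hε, sub_add_cancel, rpow_one]
    _ ≤ c * ε ^ p := mul_le_mul_of_nonneg_right hεc (rpow_nonneg hε.le p)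

section SublinearTerm

variable {a : ℝ → ℝ} {α : ℝ} {u v : ℝ → ℝ}

noncomputable def sublinearTerm (a : ℝ → ℝ) (α : ℝ) (u : ℝ → ℝ) (s : ℝ) : ℝ :=
  α / 2 * a s * u s ^ (α - 1)

lemma sublinearTerm_nonneg (ha : 0 ≤ a) (hα : 0 ≤ α) (hu : 0 ≤ u) : 0 ≤ sublinearTerm a α u :=
  fun s => mul_nonneg (mul_nonneg (by positivity) (ha s)) (rpow_nonneg (hu s) _)

lemma sublinearTerm_mono (ha : 0 ≤ a) (hα : 1 ≤ α) (hu : 0 ≤ u) (huv : u ≤ v) :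
    sublinearTerm a α u ≤ sublinearTerm a α v := fun s =>
  mul_le_mul_of_nonneg_left (rpow_le_rpow (hu s) (huv s) (by linarith))
    (mul_nonneg (by positivity) (ha s))

lemma sublinearTerm_const_mul {ε : ℝ} (hε : 0 ≤ ε) (hu : 0 ≤ u) (s : ℝ) :
    sublinearTerm a α (fun s => ε * u s) s = ε ^ (α - 1) * sublinearTerm a α u s := by
  simp only [sublinearTerm, mul_rpow hε (hu s)]
  ring

lemma continuous_sublinearTerm (ha : Continuous a) (hα : 1 ≤ α) (hu : Continuous u) :
    Continuous (sublinearTerm a α u) :=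
  (continuous_const.mul ha).mul (hu.rpow_const fun _ => Or.inr (by linarith))

lemma integrable_sublinearTerm (ha : Integrable a) (ha0 : 0 ≤ a) (hα : 1 ≤ α) {M : ℝ}
    (hu : Measurable u) (hu0 : 0 ≤ u) (huM : u ≤ fun _ => M) :
    Integrable (sublinearTerm a α u) := by
  refine (ha.const_mul (α / 2 * M ^ (α - 1))).mono'
    ((ha.1.const_mul _).mul (hu.pow_const _).aestronglyMeasurable) (ae_of_all _ fun s => ?_)
  rw [norm_of_nonneg (sublinearTerm_nonneg ha0 (by linarith) hu0 s)]
  calc sublinearTerm a α u s ≤ sublinearTerm a α (fun _ => M) s :=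
        sublinearTerm_mono ha0 hα hu0 huM s
    _ = α / 2 * M ^ (α - 1) * a s := by simp only [sublinearTerm]; ring

def measurableOrderInterval (M : ℝ) : Set (ℝ → ℝ) :=
  {u | Measurable u ∧ 0 ≤ u ∧ u ≤ fun _ => M}

variable {M : ℝ}

lemma mapsTo_convolution_sublinearTerm (ha : Integrable a) (ha0 : 0 ≤ a) (hα : 1 ≤ α)
    (hM : α / 2 * (∫ s, a s) * M ^ (α - 1) ≤ M) :
    MapsTo (fun u => sublinearTerm a α u ⋆ expNegAbs) (measurableOrderInterval M)
      (measurableOrderInterval M) := by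
  rintro u ⟨hu, hu0, huM⟩
  have hint := integrable_sublinearTerm ha ha0 hα hu hu0 huM
  have hg0 := sublinearTerm_nonneg ha0 (by linarith : 0 ≤ α) hu0
  refine ⟨(continuous_convolution_expNegAbs hint).measurable, convolution_expNegAbs_nonneg hg0,
    fun t => ?_⟩
  calc (sublinearTerm a α u ⋆ expNegAbs) t ≤ ∫ s, sublinearTerm a α u s :=
        convolution_expNegAbs_le_integral hint hg0 t
    _ ≤ ∫ s, sublinearTerm a α (fun _ => M) s :=
        integral_mono hint (integrable_sublinearTerm ha ha0 hα measurable_const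
          (fun _ => (hu0 0).trans (huM 0)) le_rfl) (sublinearTerm_mono ha0 hα hu0 huM)
    _ = α / 2 * (∫ s, a s) * M ^ (α - 1) := by
        simp only [sublinearTerm, integral_mul_const, integral_const_mul]
    _ ≤ M := hM

lemma monotoneOn_convolution_sublinearTerm (ha : Integrable a) (ha0 : 0 ≤ a) (hα : 1 ≤ α) :
    MonotoneOn (fun u => sublinearTerm a α u ⋆ expNegAbs) (measurableOrderInterval M) :=
  fun _ ⟨hu, hu0, huM⟩ _ ⟨hv, hv0, hvM⟩ huv =>
    convolution_expNegAbs_mono (integrable_sublinearTerm ha ha0 hα hu hu0 huM)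
      (integrable_sublinearTerm ha ha0 hα hv hv0 hvM) (sublinearTerm_mono ha0 hα hu0 huv)

lemma tendsto_convolution_sublinearTerm_of_monotone (ha : Integrable a) (ha0 : 0 ≤ a)
    (hα : 1 ≤ α) {v : ℕ → ℝ → ℝ}
    (hv : ∀ k, v k ∈ measurableOrderInterval M) (hv_mono : Monotone v) {u : ℝ → ℝ}
    (hvu : Tendsto v atTop (𝓝 u)) :
    u ∈ measurableOrderInterval M ∧
      Tendsto (fun k => sublinearTerm a α (v k) ⋆ expNegAbs) atTop
        (𝓝 (sublinearTerm a α u ⋆ expNegAbs)) := by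
  have hu : u ∈ measurableOrderInterval M :=
    ⟨measurable_of_tendsto_metrizable (fun k => (hv k).1) hvu,
      ge_of_tendsto' hvu fun k => (hv k).2.1, le_of_tendsto' hvu fun k => (hv k).2.2⟩
  refine ⟨hu, tendsto_pi_nhds.2 fun t => tendsto_convolution_expNegAbs_of_monotone
    (fun k => integrable_sublinearTerm ha ha0 hα (hv k).1 (hv k).2.1 (hv k).2.2)
    (integrable_sublinearTerm ha ha0 hα hu.1 hu.2.1 hu.2.2)
    (fun s i j hij => sublinearTerm_mono ha0 hα (hv i).2.1 (hv_mono hij) s) (fun s => ?_) t⟩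
  exact ((continuousAt_rpow_const _ _ (Or.inr (by linarith))).tendsto.comp
    (tendsto_pi_nhds.1 hvu s)).const_mul (α / 2 * a s)

lemma integral_sublinearTerm_expNegAbs_mul_pos (ha : Integrable a) (ha0 : 0 ≤ a)
    (ha_cont : Continuous a) (ha_ne : ∃ t, a t ≠ 0)
    (hα : 1 < α) : 0 < ∫ s, sublinearTerm a α expNegAbs s * expNegAbs s := by
  obtain ⟨t₀, ht₀⟩ := ha_ne
  have hK0 : 0 ≤ expNegAbs := fun t => (expNegAbs_pos t).le
  refine integral_pos_of_integrable_nonneg_nonzero (x := t₀)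
    ((continuous_sublinearTerm ha_cont hα.le continuous_expNegAbs).mul continuous_expNegAbs)
    ((integrable_sublinearTerm ha ha0 hα.le continuous_expNegAbs.measurable hK0
      expNegAbs_le_one).mul_bdd (by fun_prop) (ae_of_all _ fun _ => norm_expNegAbs_le_one _))
    (fun s => mul_nonneg (sublinearTerm_nonneg ha0 (by linarith) hK0 s) (hK0 s)) ?_
  have := expNegAbs_pos t₀
  have := (ha0 t₀).lt_of_ne' ht₀
  simp only [sublinearTerm]
  positivity

lemma smul_expNegAbs_le_convolution_sublinearTerm (ha : Integrable a) (ha0 : 0 ≤ a)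
    (hα : 1 ≤ α) {ε : ℝ} (hε0 : 0 ≤ ε)
    (hε : ε ≤ (∫ s, sublinearTerm a α expNegAbs s * expNegAbs s) * ε ^ (α - 1)) (t : ℝ) :
    ε * expNegAbs t ≤ (sublinearTerm a α (fun s => ε * expNegAbs s) ⋆ expNegAbs) t := by
  have hK0 : 0 ≤ expNegAbs := fun t => (expNegAbs_pos t).le
  calc ε * expNegAbs t
      ≤ (∫ s, sublinearTerm a α expNegAbs s * expNegAbs s) * ε ^ (α - 1) * expNegAbs t :=
        mul_le_mul_of_nonneg_right hε (hK0 t)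
    _ = expNegAbs t * ∫ s, sublinearTerm a α (fun s => ε * expNegAbs s) s * expNegAbs s := by
        simp only [sublinearTerm_const_mul hε0 hK0, mul_assoc, integral_const_mul]
        ring
    _ ≤ _ := expNegAbs_mul_integral_le_convolution
        (integrable_sublinearTerm ha ha0 hα (continuous_const.mul continuous_expNegAbs).measurable
          (fun s => mul_nonneg hε0 (hK0 s))
          (fun s => mul_le_of_le_one_right hε0 (expNegAbs_le_one s)))
        (sublinearTerm_nonneg ha0 (by linarith) fun s => mul_nonneg hε0 (hK0 s)) t

end SublinearTerm

lemma exists_pos_fixedPoint {a : ℝ → ℝ} {α : ℝ} (ha_cont : Continuous a) (ha0 : 0 ≤ a)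
    (ha_ne : ∃ t, a t ≠ 0) (ha : Integrable a) (hα1 : 1 < α) (hα2 : α < 2) :
    ∃ M, ∃ u ∈ measurableOrderInterval M, Continuous u ∧ (∀ t, 0 < u t) ∧
      sublinearTerm a α u ⋆ expNegAbs = u := by
  have hp : α - 1 < 1 := by linarith
  obtain ⟨M, hM, hM0⟩ := ((eventually_mul_rpow_le_self hp (α / 2 * ∫ s, a s)).and
    (eventually_gt_atTop 0)).exists
  obtain ⟨ε, ⟨hεc, hεM⟩, hε0 : 0 < ε⟩ :=
    ((eventually_le_mul_rpow_self hp (integral_sublinearTerm_expNegAbs_mul_pos ha ha0 ha_cont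
      ha_ne hα1)).and (nhdsWithin_le_nhds (eventually_lt_nhds hM0))).and
      self_mem_nhdsWithin |>.exists
  have hu₀ : (fun t => ε * expNegAbs t) ∈ measurableOrderInterval M :=
    ⟨by fun_prop, fun t => (mul_pos hε0 (expNegAbs_pos t)).le,
      fun t => (mul_le_of_le_one_right hε0.le (expNegAbs_le_one t)).trans hεM.le⟩
  obtain ⟨u, hu, hu₀u, hfix⟩ := exists_fixedPoint_of_monotoneOn (fun u hu => hu.2.2)
    (mapsTo_convolution_sublinearTerm ha ha0 hα1.le hM)
    (monotoneOn_convolution_sublinearTerm ha ha0 hα1.le) hu₀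
    (smul_expNegAbs_le_convolution_sublinearTerm ha ha0 hα1.le hε0.le hεc)
    (fun v hv hv_mono u => tendsto_convolution_sublinearTerm_of_monotone ha ha0 hα1.le hv hv_mono)
  refine ⟨M, u, hu, ?_, fun t => (mul_pos hε0 (expNegAbs_pos t)).trans_le (hu₀u t), hfix⟩
  rw [← hfix]
  exact continuous_convolution_expNegAbs (integrable_sublinearTerm ha ha0 hα1.le hu.1 hu.2.1 hu.2.2)

lemma exists_pos_solution {a : ℝ → ℝ} {α : ℝ} (ha_cont : Continuous a) (ha0 : 0 ≤ a)
    (ha_ne : ∃ t, a t ≠ 0) (ha : Integrable a) (hα1 : 1 < α) (hα2 : α < 2) :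
    ∃ (M : ℝ) (u u' : ℝ → ℝ), (∀ t, 0 < u t) ∧ (∀ t, u t ≤ M) ∧ Integrable u ∧
      (∀ t, HasDerivAt u (u' t) t) ∧ (∀ t, HasDerivAt u' (u t - α * a t * u t ^ (α - 1)) t) ∧
      ∀ t, |u' t| ≤ u t := by
  obtain ⟨M, u, ⟨hu, hu0, huM⟩, hu_cont, hu_pos, hfix⟩ :=
    exists_pos_fixedPoint ha_cont ha0 ha_ne ha hα1 hα2
  set g := sublinearTerm a α u
  have hg : Continuous g := continuous_sublinearTerm ha_cont hα1.le hu_cont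
  have hgi : Integrable g := integrable_sublinearTerm ha ha0 hα1.le hu hu0 huM
  have hg0 : 0 ≤ g := sublinearTerm_nonneg ha0 (by linarith) hu0
  refine ⟨M, u, fun t => greenRight g t - greenLeft g t, hu_pos, huM,
    hfix ▸ integrable_convolution_expNegAbs hgi,
    fun t => hfix ▸ hasDerivAt_convolution_expNegAbs hg hgi t, fun t => ?_,
    fun t => hfix ▸ abs_greenRight_sub_greenLeft_le hgi hg0 t⟩
  refine (hfix ▸ hasDerivAt_greenRight_sub_greenLeft hg hgi t).congr_deriv ?_
  simp only [g, sublinearTerm]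
  ring

section NormDerivLe

variable {E : Type*} [NormedAddCommGroup E] [NormedSpace ℝ E] [CompleteSpace E] {f f' : ℝ → E}

lemma aestronglyMeasurable_of_hasDerivAt (hf : ∀ t, HasDerivAt f (f' t) t) :
    AEStronglyMeasurable f' := by
  rw [show f' = deriv f from funext fun t => (hf t).deriv.symm]
  exact (stronglyMeasurable_deriv f).aestronglyMeasurable

lemma tendsto_zero_of_norm_deriv_le (hf : ∀ t, HasDerivAt f (f' t) t)
    (hle : ∀ t, ‖f' t‖ ≤ ‖f t‖) (hint : Integrable f) :
    Tendsto f atTop (𝓝 0) ∧ Tendsto f atBot (𝓝 0) ∧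
      Tendsto f' atTop (𝓝 0) ∧ Tendsto f' atBot (𝓝 0) := by
  have hint' : Integrable f' := hint.mono (aestronglyMeasurable_of_hasDerivAt hf) (ae_of_all _ hle)
  have htop := tendsto_zero_of_hasDerivAt_of_integrableOn_Ioi (a := 0) (fun t _ => hf t)
    hint'.integrableOn hint.integrableOn
  have hbot := tendsto_zero_of_hasDerivAt_of_integrableOn_Iic (a := 0) (fun t _ => hf t)
    hint'.integrableOn hint.integrableOn
  exact ⟨htop, hbot, squeeze_zero_norm hle (tendsto_norm_zero.comp htop),
    squeeze_zero_norm hle (tendsto_norm_zero.comp hbot)⟩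

lemma integrable_norm_sq_add_norm_deriv_sq (hf : ∀ t, HasDerivAt f (f' t) t)
    (hle : ∀ t, ‖f' t‖ ≤ ‖f t‖) (hint : Integrable f) {M : ℝ} (hM : ∀ t, ‖f t‖ ≤ M) :
    Integrable fun t => ‖f t‖ ^ 2 + ‖f' t‖ ^ 2 := by
  refine (hint.norm.const_mul (2 * M)).mono' ((hint.1.norm.pow 2).add
    ((aestronglyMeasurable_of_hasDerivAt hf).norm.pow 2))
    (ae_of_all _ fun t => ?_)
  rw [norm_of_nonneg (by positivity)]
  calc ‖f t‖ ^ 2 + ‖f' t‖ ^ 2 ≤ 2 * ‖f t‖ ^ 2 := by nlinarith [hle t, norm_nonneg (f' t)]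
    _ ≤ 2 * M * ‖f t‖ := by nlinarith [norm_nonneg (f t), hM t]

end NormDerivLe

theorem stmt_18_general (n : ℕ) (hn : 0 < n) (a : ℝ → ℝ) (α : ℝ)
    (ha_cont : Continuous a) (ha_nonneg : ∀ t, 0 ≤ a t) (ha_ne : ∃ t, a t ≠ 0)
    (ha_L1 : Integrable a)
    (hα1 : 1 < α) (hα2 : α < 2) :
    ∃ q : ℝ → EuclideanSpace ℝ (Fin n),
      Differentiable ℝ q ∧
      Integrable (fun t => ‖q t‖ ^ 2 + ‖deriv q t‖ ^ 2) ∧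
      (∃ t, q t ≠ 0) ∧
      (∀ t, HasDerivAt (deriv q) (q t - (α * a t * ‖q t‖ ^ (α - 2)) • q t) t) ∧
      Tendsto q atTop (nhds 0) ∧ Tendsto q atBot (nhds 0) ∧
      Tendsto (deriv q) atTop (nhds 0) ∧ Tendsto (deriv q) atBot (nhds 0) := by
  obtain ⟨M, u, u', hu_pos, huM, hu_int, hu, hu', hu'_le⟩ :=
    exists_pos_solution ha_cont ha_nonneg ha_ne ha_L1 hα1 hα2
  have : Nonempty (Fin n) := ⟨⟨0, hn⟩⟩
  obtain ⟨e, he⟩ := exists_norm_eq (EuclideanSpace ℝ (Fin n)) zero_le_one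
  set q := fun t => u t • e
  have hdq : deriv q = fun t => u' t • e := funext fun t => ((hu t).smul_const e).deriv
  have hq (t : ℝ) : HasDerivAt q (deriv q t) t := hdq ▸ (hu t).smul_const e
  have hq_norm (t : ℝ) : ‖q t‖ = u t := by simp [q, norm_smul, he, (hu_pos t).le]
  have hdq_le (t : ℝ) : ‖deriv q t‖ ≤ ‖q t‖ := by simpa [hdq, norm_smul, he, hq_norm] using hu'_le t
  have hq_int : Integrable q := hu_int.smul_const e
  refine ⟨q, fun t => (hq t).differentiableAt,
    integrable_norm_sq_add_norm_deriv_sq hq hdq_le hq_int (M := M) (fun t => hq_norm t ▸ huM t),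
    ⟨0, by rw [← norm_ne_zero_iff, hq_norm]; exact (hu_pos 0).ne'⟩, fun t => ?_,
    tendsto_zero_of_norm_deriv_le hq hdq_le hq_int⟩
  rw [hdq]
  refine ((hu' t).smul_const e).congr_deriv ?_
  rw [hq_norm, show α - 1 = α - 2 + 1 by ring, rpow_add_one (hu_pos t).ne']
  simp only [q, smul_smul, ← sub_smul]
  congr 1
  ring

/-- main theorem of the paper: under (a₁)–(a₂) and `1 < α < 2`,
the system `q'' + V_q(t,q) = 0`, `V(t,q) = −½‖q‖² + a(t)‖q‖^α`, i.e.
`q'' = q − α a(t)‖q‖^{α−2} q`, has a nonzero homoclinic solution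
`q ∈ H¹(ℝ,ℝⁿ)` with `q(±∞) = 0` and `q'(±∞) = 0`. -/
theorem stmt_18 (n : ℕ) (hn : 0 < n) (a : ℝ → ℝ) (α : ℝ)
    (ha_cont : Continuous a) (ha_nonneg : ∀ t, 0 ≤ a t) (ha_ne : ∃ t, a t ≠ 0)
    (ha_L1 : Integrable a) (ha_L2 : Integrable (fun t => (a t) ^ 2))
    (hα1 : 1 < α) (hα2 : α < 2) :
    ∃ q : ℝ → EuclideanSpace ℝ (Fin n),
      Differentiable ℝ q ∧
      Integrable (fun t => ‖q t‖ ^ 2 + ‖deriv q t‖ ^ 2) ∧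
      (∃ t, q t ≠ 0) ∧
      (∀ t, HasDerivAt (deriv q) (q t - (α * a t * ‖q t‖ ^ (α - 2)) • q t) t) ∧
      Tendsto q atTop (nhds 0) ∧ Tendsto q atBot (nhds 0) ∧
      Tendsto (deriv q) atTop (nhds 0) ∧ Tendsto (deriv q) atBot (nhds 0) :=
  stmt_18_general n hn a α ha_cont ha_nonneg ha_ne ha_L1 hα1 hα2
end
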